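/- For all x₁, x₂, μ ≥ 0, one has ψ(x₁ + x₂, μ) ≤ (1/2)·ψ(2,μ)·(ψ(x₁,μ) + ψ(x₂,μ)). -/

import Mathlib

/-!
Write `ψ(x, μ) = x * exp (μ * g x)` with `g x = √(2 log (1 + x))`. Since
`1 + ab ≤ (1 + a)(1 + b)` and `√` is subadditive, `g (ab) ≤ g a + g b`, so `ψ` is
submultiplicative: `ψ(ab) ≤ ψ(a) ψ(b)`. The function `t * g t` is convex on `[0, ∞)` (its second
derivative has the sign of `(t + 2) g² - t`, nonnegative as `log (1 + t) ≥ t / (1 + t)`), and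
taking the perspective of `exp` shows that `ψ(·, μ)` is convex. Hence
`ψ(x₁ + x₂) ≤ (ψ(2x₁) + ψ(2x₂)) / 2 ≤ ψ(2) (ψ(x₁) + ψ(x₂)) / 2`.
-/

noncomputable def psi (x μ : ℝ) : ℝ := x * Real.exp (μ * Real.sqrt (2 * Real.log (1 + x)))

open Real Set

noncomputable def psiExponent (t : ℝ) : ℝ := √(2 * log (1 + t))

lemma psi_def (x μ : ℝ) : psi x μ = x * exp (μ * psiExponent x) := rfl

lemma psiExponent_pos {t : ℝ} (ht : 0 < t) : 0 < psiExponent t :=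
  sqrt_pos.2 (mul_pos two_pos (log_pos (by linarith)))

lemma psiExponent_sq {t : ℝ} (ht : 0 ≤ t) : psiExponent t ^ 2 = 2 * log (1 + t) :=
  sq_sqrt (mul_nonneg zero_le_two (log_nonneg (by linarith)))

lemma sqrt_add_le_add_sqrt {a b : ℝ} (ha : 0 ≤ a) (hb : 0 ≤ b) : √(a + b) ≤ √a + √b := by
  rw [sqrt_le_left (by positivity)]
  nlinarith [sq_sqrt ha, sq_sqrt hb, sqrt_nonneg a, sqrt_nonneg b]

lemma psiExponent_mul_le {a b : ℝ} (ha : 0 ≤ a) (hb : 0 ≤ b) :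
    psiExponent (a * b) ≤ psiExponent a + psiExponent b := by
  have hloga : 0 ≤ log (1 + a) := log_nonneg (by linarith)
  have hlogb : 0 ≤ log (1 + b) := log_nonneg (by linarith)
  have hlog : log (1 + a * b) ≤ log (1 + a) + log (1 + b) := by
    rw [← log_mul (by positivity) (by positivity)]
    exact log_le_log (by positivity) (by nlinarith)
  calc psiExponent (a * b) ≤ √(2 * log (1 + a) + 2 * log (1 + b)) :=
        sqrt_le_sqrt (by linarith)
    _ ≤ psiExponent a + psiExponent b := sqrt_add_le_add_sqrt (by positivity) (by positivity)

theorem psi_mul_le {a b μ : ℝ} (ha : 0 ≤ a) (hb : 0 ≤ b) (hμ : 0 ≤ μ) :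
    psi (a * b) μ ≤ psi a μ * psi b μ := by
  simp only [psi_def]
  calc a * b * exp (μ * psiExponent (a * b))
      ≤ a * b * exp (μ * (psiExponent a + psiExponent b)) := by
        gcongr
        exact psiExponent_mul_le ha hb
    _ = a * exp (μ * psiExponent a) * (b * exp (μ * psiExponent b)) := by
        rw [mul_add, exp_add]; ring

/-- The perspective `(u, t) ↦ t * h (u / t)` of a convex monotone `h` is jointly convex. -/
theorem ConvexOn.id_mul_comp {f h : ℝ → ℝ} (hf : ConvexOn ℝ (Ici 0) fun t => t * f t)
    (hh : ConvexOn ℝ univ h) (hh_mono : Monotone h) :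
    ConvexOn ℝ (Ici 0) fun t => t * h (f t) := by
  refine ⟨convex_Ici 0, fun a ha b hb θ η hθ hη hθη => ?_⟩
  have hfc := hf.2 ha hb hθ hη hθη
  simp only [mem_Ici, smul_eq_mul] at ha hb hfc ⊢
  set c := θ * a + η * b
  rcases (show 0 ≤ c by positivity).eq_or_lt with hc | hc
  · have hθa : θ * a = 0 := by nlinarith [mul_nonneg hθ ha, mul_nonneg hη hb]
    have hηb : η * b = 0 := by nlinarith [mul_nonneg hθ ha, mul_nonneg hη hb]
    rw [← hc, zero_mul, ← mul_assoc, ← mul_assoc, hθa, hηb]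
    simp
  · have hpq : θ * a / c + η * b / c = 1 := by rw [← add_div, div_self hc.ne']
    have hfc' : f c ≤ θ * a / c * f a + η * b / c * f b :=
      ((le_div_iff₀' hc).2 hfc).trans_eq (by ring)
    calc c * h (f c) ≤ c * h (θ * a / c * f a + η * b / c * f b) := by
          gcongr; exact hh_mono hfc'
      _ ≤ c * (θ * a / c * h (f a) + η * b / c * h (f b)) := by
          gcongr
          simpa only [smul_eq_mul] using
            hh.2 (mem_univ _) (mem_univ _) (by positivity) (by positivity) hpq
      _ = θ * (a * h (f a)) + η * (b * h (f b)) := by field_simp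

lemma hasDerivAt_psiExponent {t : ℝ} (ht : 0 < t) :
    HasDerivAt psiExponent ((1 + t) * psiExponent t)⁻¹ t := by
  have h := ((((hasDerivAt_id' t).const_add 1).log (by positivity)).const_mul 2).sqrt
    (mul_pos two_pos (log_pos (by linarith))).ne'
  refine h.congr_deriv ?_
  have := (psiExponent_pos ht).ne'
  simp only [psiExponent] at this ⊢
  field_simp

lemma hasDerivAt_id_mul_psiExponent {t : ℝ} (ht : 0 < t) :
    HasDerivAt (fun t => t * psiExponent t) (psiExponent t + t / ((1 + t) * psiExponent t)) t :=
  ((hasDerivAt_id' t).fun_mul (hasDerivAt_psiExponent ht)).congr_deriv (by ring)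

lemma hasDerivAt_deriv_id_mul_psiExponent {t : ℝ} (ht : 0 < t) :
    HasDerivAt (fun t => psiExponent t + t / ((1 + t) * psiExponent t))
      (((t + 2) * psiExponent t ^ 2 - t) / ((1 + t) ^ 2 * psiExponent t ^ 3)) t := by
  have hg := (psiExponent_pos ht).ne'
  have h1t : 1 + t ≠ 0 := by positivity
  refine ((hasDerivAt_psiExponent ht).add ((hasDerivAt_id' t).fun_div
    (((hasDerivAt_id' t).const_add 1).fun_mul (hasDerivAt_psiExponent ht))
    (mul_ne_zero h1t hg))).congr_deriv ?_
  field_simp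
  ring

lemma le_add_two_mul_psiExponent_sq {t : ℝ} (ht : 0 ≤ t) : t ≤ (t + 2) * psiExponent t ^ 2 := by
  have hlog : t / (1 + t) ≤ log (1 + t) := by
    calc t / (1 + t) = 1 - (1 + t)⁻¹ := by field_simp; ring
      _ ≤ log (1 + t) := one_sub_inv_le_log_of_pos (by linarith)
  rw [psiExponent_sq ht]
  calc t ≤ (t + 2) * (2 * (t / (1 + t))) := by
        rw [show (t + 2) * (2 * (t / (1 + t))) = t * (2 * (t + 2) / (1 + t)) by ring]
        exact le_mul_of_one_le_right ht ((one_le_div (by positivity)).2 (by linarith))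
    _ ≤ (t + 2) * (2 * log (1 + t)) := by gcongr

lemma convexOn_id_mul_psiExponent : ConvexOn ℝ (Ici 0) fun t => t * psiExponent t := by
  refine convexOn_of_hasDerivWithinAt2_nonneg (convex_Ici 0)
    (f' := fun t => psiExponent t + t / ((1 + t) * psiExponent t))
    (f'' := fun t => ((t + 2) * psiExponent t ^ 2 - t) / ((1 + t) ^ 2 * psiExponent t ^ 3)) ?_
    (fun t ht => ?_) (fun t ht => ?_) (fun t ht => ?_)
  · refine continuousOn_id.mul ((continuousOn_const.mul
      (ContinuousOn.log (by fun_prop) fun t ht => ?_)).sqrt)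
    have : 0 ≤ t := ht
    positivity
  all_goals rw [interior_Ici, mem_Ioi] at ht
  · exact (hasDerivAt_id_mul_psiExponent ht).hasDerivWithinAt
  · exact (hasDerivAt_deriv_id_mul_psiExponent ht).hasDerivWithinAt
  · have := psiExponent_pos ht
    have := le_add_two_mul_psiExponent_sq ht.le
    exact div_nonneg (by linarith) (by positivity)

theorem convexOn_psi {μ : ℝ} (hμ : 0 ≤ μ) : ConvexOn ℝ (Ici 0) fun x => psi x μ := by
  have h : ConvexOn ℝ (Ici 0) fun t => t * (μ * psiExponent t) := by
    simpa only [smul_eq_mul, mul_left_comm] using convexOn_id_mul_psiExponent.smul hμ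
  exact h.id_mul_comp convexOn_exp exp_monotone

theorem psi_subadditive (x₁ x₂ μ : ℝ) (hx₁ : 0 ≤ x₁) (hx₂ : 0 ≤ x₂) (hμ : 0 ≤ μ) :
    psi (x₁ + x₂) μ ≤ (1 / 2) * psi 2 μ * (psi x₁ μ + psi x₂ μ) := by
  have hmid := (convexOn_psi hμ).2 (mem_Ici.2 (by positivity : (0 : ℝ) ≤ 2 * x₁))
    (mem_Ici.2 (by positivity : (0 : ℝ) ≤ 2 * x₂)) (by norm_num : (0 : ℝ) ≤ 1 / 2)
    (by norm_num : (0 : ℝ) ≤ 1 / 2) (by norm_num)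
  simp only [smul_eq_mul] at hmid
  calc psi (x₁ + x₂) μ = psi (1 / 2 * (2 * x₁) + 1 / 2 * (2 * x₂)) μ := by ring_nf
    _ ≤ 1 / 2 * psi (2 * x₁) μ + 1 / 2 * psi (2 * x₂) μ := hmid
    _ ≤ 1 / 2 * (psi 2 μ * psi x₁ μ) + 1 / 2 * (psi 2 μ * psi x₂ μ) := by
        gcongr <;> exact psi_mul_le zero_le_two ‹_› hμ
    _ = 1 / 2 * psi 2 μ * (psi x₁ μ + psi x₂ μ) := by ring
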